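/- arXiv:2010.12353 — 4 statements merged into one kernel-verified Lean document; each statement's English description precedes it below -/
import Mathlib

section
/- Let Y, Y_i, Y_j be {0,1}-valued random variables on a probability space (Ω, ℙ). Then ℙ(Y_i ≠ Y) − ℙ(Y_j ≠ Y) = ℙ(Y_i ≠ Y_j) − 2·ℙ(Y_i = Y and Y_j ≠ Y). -/
/-!
For events `A`, `B` one has `P(A) − P(B) = P(A \ B) − P(B \ A) = P(A ∆ B) − 2 P(B \ A)`.
With `A = {Yi ≠ Y}` and `B = {Yj ≠ Y}`, the symmetric difference `A ∆ B` is `{Yi ≠ Yj}`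
because the variables take only two values.
-/

open MeasureTheory
open scoped symmDiff

theorem MeasureTheory.measureReal_sub_eq_measureReal_symmDiff_sub {α : Type*}
    [MeasurableSpace α] (μ : Measure α) [IsFiniteMeasure μ] {s t : Set α} (hs : MeasurableSet s)
    (ht : MeasurableSet t) :
    μ.real s - μ.real t = μ.real (s ∆ t) - 2 * μ.real (t \ s) := by
  rw [measureReal_symmDiff_eq hs ht, ← measureReal_sdiff_add_inter ht (s := s),
    ← measureReal_sdiff_add_inter hs (s := t), Set.inter_comm]
  ring

theorem Bool.setOf_ne_symmDiff_setOf_ne {α : Type*} (f g h : α → Bool) :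
    {x | f x ≠ h x} ∆ {x | g x ≠ h x} = {x | f x ≠ g x} := by
  ext x
  simp only [Set.mem_symmDiff, Set.mem_ofPred_eq]
  cases f x <;> cases g x <;> cases h x <;> decide

/-- Lemma 1: For {0,1}-valued random variables `Y, Yi, Yj` on a probability space,
`ℙ(Yi ≠ Y) − ℙ(Yj ≠ Y) = ℙ(Yi ≠ Yj) − 2 ℙ(Yi = Y ∧ Yj ≠ Y)`. -/
theorem stmt_0 {Ω : Type*} [MeasurableSpace Ω] (ℙ : Measure Ω) [IsProbabilityMeasure ℙ]
    (Y Yi Yj : Ω → Bool) (hY : Measurable Y) (hYi : Measurable Yi) (hYj : Measurable Yj) :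
    (ℙ {ω | Yi ω ≠ Y ω}).toReal - (ℙ {ω | Yj ω ≠ Y ω}).toReal
      = (ℙ {ω | Yi ω ≠ Yj ω}).toReal
        - 2 * (ℙ {ω | Yi ω = Y ω ∧ Yj ω ≠ Y ω}).toReal := by
  have hdiff : {ω | Yj ω ≠ Y ω} \ {ω | Yi ω ≠ Y ω} = {ω | Yi ω = Y ω ∧ Yj ω ≠ Y ω} := by
    ext ω
    simp [and_comm]
  have key := measureReal_sub_eq_measureReal_symmDiff_sub ℙ
    (s := {ω | Yi ω ≠ Y ω}) (t := {ω | Yj ω ≠ Y ω})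
    (measurableSet_eq_fun hYi hY).compl (measurableSet_eq_fun hYj hY).compl
  rwa [Bool.setOf_ne_symmDiff_setOf_ne, hdiff] at key
end

section
/- Let K ≥ 1 and let Y, Y_1, …, Y_K be {0,1}-valued random variables on a probability space (Ω, ℙ). Set γ(i) := ℙ(Y_i ≠ Y) and, for i < j, p(i,j) := ℙ(Y_i ≠ Y_j). Let C : {1,…,K} → ℝ and let i⋆ be the largest element of argmin_{i∈{1,…,K}} (γ(i) + C(i)). Assume the weak-dominance property: for every j > i⋆, C(j) − C(i⋆) > p(i⋆, j). Define B := { i ∈ {1,…,K} : for all j > i, C(j) − C(i) > p(i,j) } ∪ {K}. Then min B = i⋆. -/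
/-!
If some `i < i⋆` satisfied the cost condition, then `C(i⋆) − C(i) > p(i, i⋆) ≥ γ(i) − γ(i⋆)`,
the second inequality being the triangle inequality for disagreement probabilities. Hence
`γ(i) + C(i) < γ(i⋆) + C(i⋆)`, contradicting the optimality of `i⋆`. Weak dominance says
exactly that `i⋆` itself satisfies the cost condition.
-/

open MeasureTheory

theorem measureReal_setOf_ne_le_add {Ω β : Type*} [MeasurableSpace Ω] (μ : Measure Ω)
    [IsFiniteMeasure μ] (f g h : Ω → β) :
    μ.real {ω | f ω ≠ h ω} ≤ μ.real {ω | f ω ≠ g ω} + μ.real {ω | g ω ≠ h ω} := by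
  have hsub : {ω | f ω ≠ h ω} ⊆ {ω | f ω ≠ g ω} ∪ {ω | g ω ≠ h ω} := by
    intro ω hfh
    by_cases hfg : f ω = g ω
    · exact Or.inr fun hgh => hfh (hfg.trans hgh)
    · exact Or.inl hfg
  exact (measureReal_mono hsub).trans (measureReal_union_le _ _)

/-- Lemma 2: under the weak-dominance property, the least element of the set
`B = {i : ∀ j > i, C(j) − C(i) > p(i,j)} ∪ {K}` is the optimal arm `i⋆`,
where `i⋆` is the largest element of `argmin_i (γ(i) + C(i))`. -/
theorem stmt_5 {Ω : Type*} [MeasurableSpace Ω] (ℙ : Measure Ω) [IsProbabilityMeasure ℙ]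
    (K : ℕ) (hK : 1 ≤ K)
    (Y : Ω → Bool) (Ys : Fin K → Ω → Bool)
    (γ : Fin K → ℝ) (hγ : ∀ i, γ i = (ℙ {ω | Ys i ω ≠ Y ω}).toReal)
    (p : Fin K → Fin K → ℝ)
    (hp : ∀ i j, i < j → p i j = (ℙ {ω | Ys i ω ≠ Ys j ω}).toReal)
    (C : Fin K → ℝ) (istar : Fin K)
    (hmin : ∀ i, γ istar + C istar ≤ γ i + C i)
    (hWD : ∀ j, istar < j → C j - C istar > p istar j) :
    IsLeast ({i | ∀ j, i < j → C j - C i > p i j} ∪ {(⟨K - 1, by omega⟩ : Fin K)}) istar := by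
  refine ⟨Or.inl hWD, ?_⟩
  rintro i (hi | rfl)
  · by_contra! hlt
    have htri : γ i ≤ p i istar + γ istar := by
      rw [hγ, hγ, hp i istar hlt]
      exact measureReal_setOf_ne_le_add ℙ (Ys i) (Ys istar) Y
    linarith [hmin i, hi istar hlt]
  · exact Fin.le_iff_val_le_val.2 (Nat.le_sub_one_of_lt istar.isLt)
end

section
/- Let V ∈ ℝ^{d×d} be a symmetric positive definite matrix with smallest eigenvalue λ_min(V), let θ⋆, θ̂, φ ∈ ℝ^d with ‖φ‖₂ ≤ 1 and ‖θ⋆ − θ̂‖_V ≤ α for some α ≥ 0, let μ : ℝ → ℝ be Lipschitz with constant k_μ ≥ 0, and let ξ > 0. If μ(φᵀθ⋆ + α·‖φ‖_{V⁻¹}) − μ(φᵀθ̂) > ξ, then 2·k_μ·α > ξ·√(λ_min(V)). -/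
/-!
Lipschitz continuity bounds the overshoot `ξ` by `k_μ` times the gap of the arguments,
`φᵀ(θ⋆ - θ̂) + α‖φ‖_{V⁻¹}`. The weighted Cauchy–Schwarz inequality bounds the first term by
`‖φ‖_{V⁻¹}‖θ⋆ - θ̂‖_V ≤ α‖φ‖_{V⁻¹}`, so `ξ < 2 k_μ α ‖φ‖_{V⁻¹}`; finally
`λ_min(V) ‖φ‖²_{V⁻¹} ≤ ‖φ‖₂² ≤ 1`, because `V ≥ λ_min(V)` in the Loewner order.
-/

open Matrix
open scoped MatrixOrder

namespace Matrix

variable {n : Type*} [Fintype n]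

theorem PosSemidef.sq_dotProduct_mulVec_le {M : Matrix n n ℝ} (hM : M.PosSemidef) (x y : n → ℝ) :
    (x ⬝ᵥ M *ᵥ y) ^ 2 ≤ (x ⬝ᵥ M *ᵥ x) * (y ⬝ᵥ M *ᵥ y) := by
  let _ := M.toSeminormedAddCommGroup hM
  let _ := M.toInnerProductSpace hM
  have h : (M *ᵥ y ⬝ᵥ x) * (M *ᵥ y ⬝ᵥ x) ≤ (M *ᵥ x ⬝ᵥ x) * (M *ᵥ y ⬝ᵥ y) :=
    real_inner_mul_inner_self_le x y
  simpa [dotProduct_comm _ x, dotProduct_comm _ y, sq] using h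

theorem PosSemidef.dotProduct_mulVec_self_nonneg {M : Matrix n n ℝ} (hM : M.PosSemidef)
    (x : n → ℝ) : 0 ≤ x ⬝ᵥ M *ᵥ x := by
  simpa using hM.dotProduct_mulVec_nonneg x

variable [DecidableEq n]

theorem PosDef.dotProduct_inv_mulVec_eq {V : Matrix n n ℝ} (hV : V.PosDef) (x y : n → ℝ) :
    (V⁻¹ *ᵥ x) ⬝ᵥ V *ᵥ y = x ⬝ᵥ y := by
  rw [dotProduct_mulVec, ← mulVec_transpose, ← conjTranspose_eq_transpose_of_trivial,
    hV.isHermitian.eq, mulVec_mulVec, mul_nonsing_inv V (V.isUnit_iff_isUnit_det.mp hV.isUnit),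
    one_mulVec]

theorem PosDef.abs_dotProduct_le {V : Matrix n n ℝ} (hV : V.PosDef) (x y : n → ℝ) :
    |x ⬝ᵥ y| ≤ √(x ⬝ᵥ V⁻¹ *ᵥ x) * √(y ⬝ᵥ V *ᵥ y) := by
  have h := hV.posSemidef.sq_dotProduct_mulVec_le (V⁻¹ *ᵥ x) y
  rw [hV.dotProduct_inv_mulVec_eq, hV.dotProduct_inv_mulVec_eq] at h
  rw [← Real.sqrt_mul (hV.inv.posSemidef.dotProduct_mulVec_self_nonneg x)]
  exact Real.abs_le_sqrt h

theorem IsHermitian.iInf_eigenvalues_mul_dotProduct_self_le {A : Matrix n n ℝ}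
    (hA : A.IsHermitian) (x : n → ℝ) : (⨅ i, hA.eigenvalues i) * (x ⬝ᵥ x) ≤ x ⬝ᵥ A *ᵥ x := by
  have hle : algebraMap ℝ (Matrix n n ℝ) (⨅ i, hA.eigenvalues i) ≤ A := by
    rw [algebraMap_le_iff_le_spectrum hA.isSelfAdjoint, hA.spectrum_real_eq_range_eigenvalues]
    rintro _ ⟨i, rfl⟩
    exact ciInf_le (Finite.bddBelow_range _) i
  have h := (le_iff.mp hle).dotProduct_mulVec_self_nonneg x
  rwa [Algebra.algebraMap_eq_smul_one, sub_mulVec, smul_mulVec, one_mulVec, dotProduct_sub,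
    dotProduct_smul, smul_eq_mul, sub_nonneg] at h

theorem PosDef.iInf_eigenvalues_mul_dotProduct_inv_mulVec_le {V : Matrix n n ℝ} (hV : V.PosDef)
    (x : n → ℝ) : (⨅ i, hV.1.eigenvalues i) * (x ⬝ᵥ V⁻¹ *ᵥ x) ≤ x ⬝ᵥ x := by
  have hc : 0 ≤ ⨅ i, hV.1.eigenvalues i := Real.iInf_nonneg fun i => (hV.eigenvalues_pos i).le
  have hq : 0 ≤ x ⬝ᵥ V⁻¹ *ᵥ x := hV.inv.posSemidef.dotProduct_mulVec_self_nonneg x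
  have hx : 0 ≤ x ⬝ᵥ x := by simpa using PosSemidef.one.dotProduct_mulVec_self_nonneg x
  have hu := hV.1.iInf_eigenvalues_mul_dotProduct_self_le (V⁻¹ *ᵥ x)
  rw [hV.dotProduct_inv_mulVec_eq, dotProduct_comm] at hu
  have hCS : (x ⬝ᵥ V⁻¹ *ᵥ x) ^ 2 ≤ (V⁻¹ *ᵥ x ⬝ᵥ V⁻¹ *ᵥ x) * (x ⬝ᵥ x) := by
    simpa [dotProduct_comm x] using PosSemidef.one.sq_dotProduct_mulVec_le (V⁻¹ *ᵥ x) x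
  rcases hq.eq_or_lt with h0 | hpos
  · rw [← h0, mul_zero]
    exact hx
  · refine le_of_mul_le_mul_right ?_ hpos
    calc (⨅ i, hV.1.eigenvalues i) * (x ⬝ᵥ V⁻¹ *ᵥ x) * (x ⬝ᵥ V⁻¹ *ᵥ x)
        = (⨅ i, hV.1.eigenvalues i) * (x ⬝ᵥ V⁻¹ *ᵥ x) ^ 2 := by ring
      _ ≤ (⨅ i, hV.1.eigenvalues i) * ((V⁻¹ *ᵥ x ⬝ᵥ V⁻¹ *ᵥ x) * (x ⬝ᵥ x)) := by gcongr
      _ = (⨅ i, hV.1.eigenvalues i) * (V⁻¹ *ᵥ x ⬝ᵥ V⁻¹ *ᵥ x) * (x ⬝ᵥ x) := by ring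
      _ ≤ (x ⬝ᵥ V⁻¹ *ᵥ x) * (x ⬝ᵥ x) := by gcongr
      _ = (x ⬝ᵥ x) * (x ⬝ᵥ V⁻¹ *ᵥ x) := by ring

end Matrix

/-- Deterministic core of Lemma 6: if the optimistic estimate overshoots the plug-in
estimate by more than `ξ`, then `2 k_μ α > ξ √(λ_min(V))`. -/
theorem stmt_7 {d : ℕ} (V : Matrix (Fin d) (Fin d) ℝ) (hV : V.PosDef)
    (θstar θhat φ : Fin d → ℝ) (hφ : Real.sqrt (φ ⬝ᵥ φ) ≤ 1)
    (α : ℝ) (hα : 0 ≤ α)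
    (hconf : Real.sqrt ((θstar - θhat) ⬝ᵥ V *ᵥ (θstar - θhat)) ≤ α)
    (μ : ℝ → ℝ) (kμ : ℝ) (hkμ : 0 ≤ kμ)
    (hLip : ∀ a b, |μ a - μ b| ≤ kμ * |a - b|)
    (ξ : ℝ) (hξ : 0 < ξ)
    (h : μ (φ ⬝ᵥ θstar + α * Real.sqrt (φ ⬝ᵥ V⁻¹ *ᵥ φ)) - μ (φ ⬝ᵥ θhat) > ξ) :
    2 * kμ * α > ξ * Real.sqrt (⨅ i, hV.1.eigenvalues i) := by
  set w := √(φ ⬝ᵥ V⁻¹ *ᵥ φ)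
  set s := √(⨅ i, hV.1.eigenvalues i)
  have hw : 0 ≤ w := Real.sqrt_nonneg _
  have hs : 0 ≤ s := Real.sqrt_nonneg _
  have hdrift : |φ ⬝ᵥ (θstar - θhat)| ≤ w * α :=
    (hV.abs_dotProduct_le φ _).trans (mul_le_mul_of_nonneg_left hconf hw)
  have hξw : ξ < 2 * kμ * α * w :=
    calc ξ < |μ (φ ⬝ᵥ θstar + α * w) - μ (φ ⬝ᵥ θhat)| := h.trans_le (le_abs_self _)
      _ ≤ kμ * |φ ⬝ᵥ (θstar - θhat) + α * w| :=
        (hLip _ _).trans_eq (by rw [dotProduct_sub, add_sub_right_comm])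
      _ ≤ kμ * (w * α + α * w) := by
        gcongr
        exact (abs_add_le _ _).trans (by rw [abs_of_nonneg (mul_nonneg hα hw)]; gcongr)
      _ = 2 * kμ * α * w := by ring
  have hws : s * w ≤ 1 := by
    rw [← Real.sqrt_mul' _ (hV.inv.posSemidef.dotProduct_mulVec_self_nonneg φ)]
    exact (Real.sqrt_le_sqrt (hV.iInf_eigenvalues_mul_dotProduct_inv_mulVec_le φ)).trans hφ
  have hK : 0 ≤ 2 * kμ * α := by positivity
  rcases hs.eq_or_lt with hs0 | hspos
  · rw [← hs0, mul_zero]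
    exact pos_of_mul_pos_left (hξ.trans hξw) hw
  · calc ξ * s < 2 * kμ * α * w * s := by gcongr
      _ = 2 * kμ * α * (s * w) := by ring
      _ ≤ 2 * kμ * α := mul_le_of_le_one_right hK hws
end

section
/- Let K ≥ 1 and let Y, Y_1, …, Y_K be {0,1}-valued random variables on a probability space (Ω, ℙ). Set γ(i) := ℙ(Y_i ≠ Y) and p(i,j) := ℙ(Y_i ≠ Y_j). Let C : {1,…,K} → ℝ and let i⋆ be the largest element of argmin_{i∈{1,…,K}} (γ(i) + C(i)). Then the following two conditions are equivalent: (a) for every j < i⋆, C(i⋆) − C(j) ∉ (γ(j) − γ(i⋆), p(j, i⋆)], and for every j > i⋆, C(j) − C(i⋆) ∉ (γ(i⋆) − γ(j), p(i⋆, j)]; (b) for every j > i⋆, C(j) − C(i⋆) > p(i⋆, j). -/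
open MeasureTheory

/-!
Write `f i = γ i + C i`. For `j < i⋆` minimality of `f i⋆` gives `C i⋆ - C j ≤ γ j - γ i⋆`, so the
first half of (a) holds for free. For `j > i⋆`, `i⋆` being the *largest* minimizer makes the
inequality strict, `C j - C i⋆ > γ i⋆ - γ j`; so `C j - C i⋆` lies above the left end of the
interval, and avoiding the interval means exceeding its right end `p i⋆ j`, which is (b).
-/

theorem lt_apply_of_isLargestArgmin_of_lt {ι α : Type*} [LinearOrder ι] [LinearOrder α]
    {f : ι → α} {istar j : ι} (hmin : ∀ i, f istar ≤ f i)
    (hlargest : ∀ i, (∀ k, f i ≤ f k) → i ≤ istar) (hj : istar < j) : f istar < f j :=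
  (hmin j).lt_of_ne fun h => (hlargest j fun k => h ▸ hmin k).not_gt hj

theorem Set.notMem_Ioc_iff_of_lt {α : Type*} [LinearOrder α] {a b x : α} (ha : a < x) :
    x ∉ Set.Ioc a b ↔ b < x := by
  simp [Set.mem_Ioc, ha]

theorem stmt_13_general
    (K : ℕ)
    (γ : Fin K → ℝ)
    (p : Fin K → Fin K → ℝ)
    (C : Fin K → ℝ) (istar : Fin K)
    (hmin : ∀ i, γ istar + C istar ≤ γ i + C i)
    (hlargest : ∀ i, (∀ k, γ i + C i ≤ γ k + C k) → i ≤ istar) :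
    ((∀ j, j < istar → C istar - C j ∉ Set.Ioc (γ j - γ istar) (p j istar)) ∧
     (∀ j, istar < j → C j - C istar ∉ Set.Ioc (γ istar - γ j) (p istar j)))
    ↔ (∀ j, istar < j → C j - C istar > p istar j) := by
  have below : ∀ j, j < istar → C istar - C j ∉ Set.Ioc (γ j - γ istar) (p j istar) :=
    fun j _ => Set.notMem_Ioc_of_le (by linarith [hmin j])
  have above (j) (hj : istar < j) :
      C j - C istar ∉ Set.Ioc (γ istar - γ j) (p istar j) ↔ C j - C istar > p istar j := by
    have := lt_apply_of_isLargestArgmin_of_lt (f := fun i => γ i + C i) hmin hlargest hj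
    exact Set.notMem_Ioc_iff_of_lt (by linarith)
  rw [and_iff_right below]
  exact forall₂_congr above

/-- Key step in Theorem 1: for the optimal arm `i⋆` (largest minimizer of `γ(i) + C(i)`),
the interval-avoidance conditions (a) hold for all arms iff the weak-dominance
property (b) holds. -/
theorem stmt_13 {Ω : Type*} [MeasurableSpace Ω] (ℙ : Measure Ω) [IsProbabilityMeasure ℙ]
    (K : ℕ) (hK : 1 ≤ K)
    (Y : Ω → Bool) (Ys : Fin K → Ω → Bool)
    (hY : Measurable Y) (hYs : ∀ i, Measurable (Ys i))
    (γ : Fin K → ℝ) (hγ : ∀ i, γ i = (ℙ {ω | Ys i ω ≠ Y ω}).toReal)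
    (p : Fin K → Fin K → ℝ)
    (hp : ∀ i j, p i j = (ℙ {ω | Ys i ω ≠ Ys j ω}).toReal)
    (C : Fin K → ℝ) (istar : Fin K)
    (hmin : ∀ i, γ istar + C istar ≤ γ i + C i)
    (hlargest : ∀ i, (∀ k, γ i + C i ≤ γ k + C k) → i ≤ istar) :
    ((∀ j, j < istar → C istar - C j ∉ Set.Ioc (γ j - γ istar) (p j istar)) ∧
     (∀ j, istar < j → C j - C istar ∉ Set.Ioc (γ istar - γ j) (p istar j)))
    ↔ (∀ j, istar < j → C j - C istar > p istar j) :=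
  stmt_13_general K γ p C istar hmin hlargest
end
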